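/- Let ξ be a primitive 8th root of unity and τ ∈ PGL(8,ℂ) be induced by diag(1, ξ, ξ², ..., ξ⁷), and let σ₂, σ₃ ∈ PGL(8,ℂ) be the coordinate permutations (1357)(2468) and (1256)(4387). Then the subgroup generated by σ₂ and σ₃ is isomorphic to the quaternion group Q8, and the group generated by τ, σ₂, σ₃ is a nonabelian group of order 64 isomorphic to a semidirect product of the normal subgroup ℤ/8 generated by τ with Q8. -/

import Mathlib

/-- `ℂ⁸` with coordinates `x₁, …, x₈` indexed by `Fin 8` (so `xᵢ` is coordinate `i-1`). -/
abbrev V8 := Fin 8 → ℂ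

/-- `GL(8, ℂ)`, realized as the group of `ℂ`-linear automorphisms of `ℂ⁸`. -/
abbrev GL8 := V8 ≃ₗ[ℂ] V8

/-- The monomial transformation `(x_i) ↦ (c_i · x_{e i})`. -/
noncomputable def monomial (c : Fin 8 → ℂˣ) (e : Equiv.Perm (Fin 8)) : GL8 :=
  (LinearEquiv.funCongrLeft ℂ ℂ e).trans
    (LinearEquiv.piCongrRight fun i => LinearEquiv.smulOfUnit (c i))

/-- `PGL(8, ℂ) = GL(8, ℂ)/center`. -/
abbrev PGL8 := GL8 ⧸ Subgroup.center GL8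

/-- The coordinate permutation `(1357)(2468)` (in `1`-based indexing). -/
def perm2 : Equiv.Perm (Fin 8) := [(0 : Fin 8), 2, 4, 6].formPerm * [(1 : Fin 8), 3, 5, 7].formPerm

/-- The coordinate permutation `(1256)(4387)` (in `1`-based indexing). -/
def perm3 : Equiv.Perm (Fin 8) := [(0 : Fin 8), 1, 4, 5].formPerm * [(3 : Fin 8), 2, 7, 6].formPerm

/-! Products of monomial transformations are again monomial, and a monomial transformation is
central in `GL₈` exactly when it is a scalar. The permutations `σ₂`, `σ₃` act on the index
`i ∈ ℤ/8` by the affine maps `i ↦ i + 2` and `i ↦ 3i + 1`, so modulo scalars they conjugate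
`τ = diag(ξ^i)` to `τ` and `τ³`. Hence `(k, q) ↦ τ^k σ_q` is a homomorphism from `ℤ/8 ⋊ Q₈`, with
`Q₈` acting through multiplication by `1` or `3`, onto `⟨τ, σ₂, σ₃⟩`. It is injective because
`τ^k σ_q` is a scalar only if `σ_q = 1` and `ξ^k = 1`. -/

open SemidirectProduct QuaternionGroup

namespace ZMod

variable (n : ℕ)

lemma mem_zpowers_ofAdd_one (x : Multiplicative (ZMod n)) : x ∈ Subgroup.zpowers (.ofAdd 1) :=
  ⟨x.toAdd.cast, by simp [← ofAdd_zsmul]⟩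

lemma zpowers_ofAdd_one : Subgroup.zpowers (Multiplicative.ofAdd (1 : ZMod n)) = ⊤ :=
  (Subgroup.eq_top_iff' _).mpr (mem_zpowers_ofAdd_one n)

lemma orderOf_ofAdd_one : orderOf (Multiplicative.ofAdd (1 : ZMod n)) = n := by
  rw [orderOf_ofAdd_eq_addOrderOf, ZMod.addOrderOf_one]

end ZMod

lemma QuaternionGroup.closure_a_one_xa_zero (n : ℕ) [NeZero n] :
    Subgroup.closure {a 1, xa 0} = (⊤ : Subgroup (QuaternionGroup n)) := by
  refine eq_top_iff.mpr fun q _ => ?_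
  have ha : a 1 ∈ Subgroup.closure {a 1, xa (0 : ZMod (2 * n))} :=
    Subgroup.subset_closure (by simp)
  have hx : xa 0 ∈ Subgroup.closure {a 1, xa (0 : ZMod (2 * n))} :=
    Subgroup.subset_closure (by simp)
  have hpow (k : ZMod (2 * n)) : a k = a 1 ^ k.val := by rw [a_one_pow, ZMod.natCast_zmod_val]
  cases q with
  | a k => exact hpow k ▸ pow_mem ha _
  | xa k =>
    have hxa : xa 0 * a 1 ^ k.val = xa k := by rw [← hpow, xa_mul_a, zero_add]
    exact hxa ▸ mul_mem hx (pow_mem ha _)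

lemma SemidirectProduct.closure_image_inl_union_image_inr {N G : Type*} [Group N] [Group G]
    {φ : G →* MulAut N} {S : Set N} {T : Set G} (hS : Subgroup.closure S = ⊤)
    (hT : Subgroup.closure T = ⊤) :
    Subgroup.closure (inl '' S ∪ inr '' T : Set (N ⋊[φ] G)) = ⊤ := by
  refine eq_top_iff.mpr fun g _ => inl_left_mul_inr_right g ▸ mul_mem ?_ ?_
  · refine Subgroup.closure_mono Set.subset_union_left ?_
    rw [← MonoidHom.map_closure, hS]
    exact Subgroup.mem_map_of_mem _ (Subgroup.mem_top _)
  · refine Subgroup.closure_mono Set.subset_union_right ?_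
    rw [← MonoidHom.map_closure, hT]
    exact Subgroup.mem_map_of_mem _ (Subgroup.mem_top _)

lemma Subgroup.map_symm_subgroupOf_eq_comap {G K : Type*} [Group G] [Group K] {H : Subgroup K}
    (f : G →* K) (e : G ≃* H) (he : ∀ g, (e g : K) = f g) (B : Subgroup K) :
    (B.subgroupOf H).map e.symm.toMonoidHom = B.comap f := by
  ext g
  rw [mem_map_equiv, MulEquiv.symm_symm, mem_subgroupOf, he, mem_comap]

section Monomial

lemma monomial_apply (c : Fin 8 → ℂˣ) (e : Equiv.Perm (Fin 8)) (x : V8) (i : Fin 8) :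
    monomial c e x i = c i * x (e i) := by
  simp [monomial, LinearEquiv.funCongrLeft, LinearEquiv.smulOfUnit, Units.smul_def,
    LinearEquiv.piCongrRight]

lemma monomial_mul (c c' : Fin 8 → ℂˣ) (e e' : Equiv.Perm (Fin 8)) :
    monomial c e * monomial c' e' = monomial (fun i => c i * c' (e i)) (e' * e) := by
  ext x i
  simp [monomial_apply, mul_assoc]

lemma monomial_one_one : monomial 1 1 = 1 := by
  ext x i
  simp [monomial_apply]

lemma coeff_eq_of_monomial_eq {c c' : Fin 8 → ℂˣ} {e e' : Equiv.Perm (Fin 8)}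
    (h : monomial c e = monomial c' e') : c = c' := by
  funext i
  simpa [monomial_apply, Units.ext_iff] using congr($h (fun _ => 1) i)

lemma monomial_mem_center_iff {c : Fin 8 → ℂˣ} {e : Equiv.Perm (Fin 8)} :
    monomial c e ∈ Subgroup.center GL8 ↔ e = 1 ∧ ∀ i, c i = c 0 := by
  rw [Subgroup.mem_center_iff]
  constructor
  · intro h
    -- commuting with a diagonal matrix of distinct entries forces `e = 1`,
    -- commuting with the transpositions `(0 i)` then forces `c` to be constant
    have he : e = 1 := by
      let d : Fin 8 → ℂˣ := fun i => Units.mk0 ((i : ℕ) + 1 : ℂ) (Nat.cast_add_one_ne_zero _)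
      have hd := coeff_eq_of_monomial_eq <| by
        simpa only [monomial_mul, mul_one, one_mul] using h (monomial d 1)
      ext i
      have := congr_fun hd i
      simp_all [d, mul_comm]
    subst he
    refine ⟨rfl, fun i => ?_⟩
    have hs := coeff_eq_of_monomial_eq <| by
      simpa only [monomial_mul] using h (monomial 1 (Equiv.swap 0 i))
    simpa using congr_fun hs 0
  · rintro ⟨rfl, hc⟩ g
    have hscalar (y : V8) : monomial c 1 y = (c 0 : ℂ) • y := by
      funext j
      simp [monomial_apply, hc j]
    ext x i
    simp [hscalar]

lemma mk_monomial_const_mul (u : ℂˣ) (c : Fin 8 → ℂˣ) (e : Equiv.Perm (Fin 8)) :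
    (monomial (fun i => u * c i) e : PGL8) = monomial c e := by
  have hsplit : monomial (fun i => u * c i) e = monomial (fun _ => u) 1 * monomial c e := by
    rw [monomial_mul, mul_one]
    rfl
  have hu : (monomial (fun _ => u) 1 : PGL8) = 1 :=
    (QuotientGroup.eq_one_iff _).mpr (monomial_mem_center_iff.mpr ⟨rfl, fun _ => rfl⟩)
  rw [hsplit, QuotientGroup.mk_mul, hu, one_mul]

end Monomial

section Tau

variable (ξ : ℂˣ)

noncomputable def tau : PGL8 := (monomial (fun i => ξ ^ (i : ℕ)) 1 : GL8)

lemma tau_pow_mul_mk_monomial (n : ℕ) (e : Equiv.Perm (Fin 8)) :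
    tau ξ ^ n * (monomial 1 e : PGL8) = monomial (fun i => ξ ^ ((i : ℕ) * n)) e := by
  induction n with
  | zero => simp only [pow_zero, one_mul, mul_zero]; rfl
  | succ n ih =>
    rw [pow_succ', mul_assoc, ih, tau, ← QuotientGroup.mk_mul, monomial_mul, mul_one]
    congr 3
    funext i
    rw [Equiv.Perm.one_apply, ← pow_add, Nat.mul_succ, add_comm]

lemma tau_pow_eight (hξ : ξ ^ 8 = 1) : tau ξ ^ 8 = 1 := by
  have := tau_pow_mul_mk_monomial ξ 8 1
  simp_rw [mul_comm _ 8, pow_mul, hξ, one_pow] at this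
  rwa [← Pi.one_def, monomial_one_one, QuotientGroup.mk_one, mul_one] at this

-- The two sides differ in `GL₈` by the scalar `ξ ^ b`.
lemma mk_monomial_mul_tau (hξ : ξ ^ 8 = 1) {e : Equiv.Perm (Fin 8)} {m b : ℕ}
    (he : ∀ i, ((e i : ℕ) : ZMod 8) = m * (i : ℕ) + b) :
    (monomial 1 e : PGL8) * tau ξ = tau ξ ^ m * monomial 1 e := by
  have hexp (i : Fin 8) : ξ ^ (e i : ℕ) = ξ ^ b * ξ ^ ((i : ℕ) * m) := by
    have := (ZMod.natCast_eq_natCast_iff' (e i) (m * i + b) 8).mp (by push_cast; exact he i)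
    rw [pow_eq_pow_mod _ hξ, this, ← pow_eq_pow_mod _ hξ, ← pow_add]
    ring_nf
  rw [tau_pow_mul_mk_monomial, tau, ← QuotientGroup.mk_mul, monomial_mul,
    ← mk_monomial_const_mul (ξ ^ b) (fun i => ξ ^ ((i : ℕ) * m))]
  congr 3
  funext i
  simp [hexp]

end Tau

section Quaternion

/-- `a k ↦ σ₂ ^ k` and `xa k ↦ σ₃ σ₂ ^ k`, written in reversed order because `e ↦ monomial 1 e`
reverses products. -/
def quatPerm : QuaternionGroup 2 → Equiv.Perm (Fin 8)
  | a k => perm2 ^ k.val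
  | xa k => perm2 ^ k.val * perm3

lemma quatPerm_mul : ∀ x y, quatPerm (x * y) = quatPerm y * quatPerm x := by decide

lemma eq_one_of_quatPerm_eq_one : ∀ q, quatPerm q = 1 → q = 1 := by decide

def quatMult : QuaternionGroup 2 →* (ZMod 8)ˣ :=
  MonoidHom.mk' (fun | a _ => 1 | xa _ => ZMod.unitOfCoprime 3 (by norm_num)) (by decide)

lemma quatPerm_affine : ∀ q i,
    ((quatPerm q i : ℕ) : ZMod 8) = (quatMult q : ZMod 8) * (i : ℕ) + (quatPerm q 0 : ℕ) := by
  decide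

noncomputable def quatHom : QuaternionGroup 2 →* PGL8 where
  toFun q := (monomial 1 (quatPerm q) : GL8)
  map_one' := congrArg _ monomial_one_one
  map_mul' x y := by
    rw [← QuotientGroup.mk_mul, monomial_mul, quatPerm_mul]
    simp only [Pi.one_apply, mul_one]
    rfl

lemma quatHom_a_one : quatHom (a 1) = (monomial 1 perm2 : PGL8) :=
  congrArg (fun e => ((monomial 1 e : GL8) : PGL8)) (by decide : quatPerm (a 1) = perm2)

lemma quatHom_xa_zero : quatHom (xa 0) = (monomial 1 perm3 : PGL8) :=
  congrArg (fun e => ((monomial 1 e : GL8) : PGL8)) (by decide : quatPerm (xa 0) = perm3)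

lemma quatHom_injective : Function.Injective quatHom := by
  rw [← MonoidHom.ker_eq_bot_iff, eq_bot_iff]
  intro q hq
  exact eq_one_of_quatPerm_eq_one q
    (monomial_mem_center_iff.mp ((QuotientGroup.eq_one_iff _).mp hq)).1

lemma range_quatHom :
    quatHom.range = Subgroup.closure {(monomial 1 perm2 : PGL8), (monomial 1 perm3 : PGL8)} := by
  rw [MonoidHom.range_eq_map, ← closure_a_one_xa_zero 2, MonoidHom.map_closure,
    Set.image_pair, quatHom_a_one, quatHom_xa_zero]

def quatAction : QuaternionGroup 2 →* MulAut (Multiplicative (ZMod 8)) :=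
  (MulAutMultiplicative (ZMod 8)).symm.toMonoidHom.comp (AddAut.mulLeft.comp quatMult)

lemma quatAction_apply (q : QuaternionGroup 2) (x : Multiplicative (ZMod 8)) :
    quatAction q x = .ofAdd ((quatMult q : ZMod 8) * x.toAdd) := rfl

end Quaternion

section Embedding

variable (ξ : ℂˣ)

noncomputable def tauHom (hξ : ξ ^ 8 = 1) : Multiplicative (ZMod 8) →* PGL8 :=
  monoidHomOfForallMemZpowers (ZMod.mem_zpowers_ofAdd_one 8) (g' := tau ξ) <| by
    rw [ZMod.orderOf_ofAdd_one]
    exact orderOf_dvd_of_pow_eq_one (tau_pow_eight ξ hξ)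

lemma tauHom_ofAdd_one (hξ : ξ ^ 8 = 1) : tauHom ξ hξ (.ofAdd 1) = tau ξ :=
  monoidHomOfForallMemZpowers_apply_gen _ _

lemma range_tauHom (hξ : ξ ^ 8 = 1) : (tauHom ξ hξ).range = Subgroup.zpowers (tau ξ) := by
  rw [MonoidHom.range_eq_map, ← ZMod.zpowers_ofAdd_one, MonoidHom.map_zpowers, tauHom_ofAdd_one]

lemma quatHom_mul_tau (hξ : ξ ^ 8 = 1) (q : QuaternionGroup 2) :
    quatHom q * tau ξ = tau ξ ^ (quatMult q : ZMod 8).val * quatHom q :=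
  mk_monomial_mul_tau ξ hξ (b := (quatPerm q 0 : ℕ)) fun i => by
    rw [ZMod.natCast_zmod_val]
    exact quatPerm_affine q i

lemma tauHom_comp_quatAction (hξ : ξ ^ 8 = 1) (q : QuaternionGroup 2) :
    (tauHom ξ hξ).comp (quatAction q).toMonoidHom =
      (MulAut.conj (quatHom q)).toMonoidHom.comp (tauHom ξ hξ) := by
  rw [MonoidHom.eq_iff_eq_on_generator (ZMod.mem_zpowers_ofAdd_one 8)]
  have hact : quatAction q (.ofAdd 1) = .ofAdd 1 ^ (quatMult q : ZMod 8).val := by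
    rw [quatAction_apply, ← ofAdd_nsmul, nsmul_one, ZMod.natCast_zmod_val, toAdd_ofAdd, mul_one]
  simp [hact, tauHom_ofAdd_one, quatHom_mul_tau ξ hξ]

noncomputable def semidirectToPGL (hξ : ξ ^ 8 = 1) :
    Multiplicative (ZMod 8) ⋊[quatAction] QuaternionGroup 2 →* PGL8 :=
  lift (tauHom ξ hξ) quatHom (tauHom_comp_quatAction ξ hξ)

lemma semidirectToPGL_injective (hξ : IsPrimitiveRoot ξ 8) :
    Function.Injective (semidirectToPGL ξ hξ.pow_eq_one) := by
  rw [← MonoidHom.ker_eq_bot_iff, eq_bot_iff]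
  intro g hg
  obtain ⟨n, hn⟩ := (Submonoid.mem_powers_iff _ _).mp
    (mem_powers_iff_mem_zpowers.mpr (ZMod.mem_zpowers_ofAdd_one 8 g.left))
  have hscalar : (monomial (fun i => ξ ^ ((i : ℕ) * n)) (quatPerm g.right) : PGL8) = 1 := by
    rw [← tau_pow_mul_mk_monomial, ← tauHom_ofAdd_one ξ hξ.pow_eq_one, ← map_pow, hn]
    rwa [MonoidHom.mem_ker, ← inl_left_mul_inr_right g, map_mul, semidirectToPGL, lift_inl,
      lift_inr] at hg
  obtain ⟨hperm, hconst⟩ := monomial_mem_center_iff.mp ((QuotientGroup.eq_one_iff _).mp hscalar)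
  have hright : g.right = 1 := eq_one_of_quatPerm_eq_one _ hperm
  have hleft : g.left = 1 := by
    rw [← hn, ← orderOf_dvd_iff_pow_eq_one, ZMod.orderOf_ofAdd_one, ← hξ.pow_eq_one_iff_dvd]
    simpa using hconst 1
  exact Subgroup.mem_bot.mpr (SemidirectProduct.ext hleft hright)

lemma range_semidirectToPGL (hξ : ξ ^ 8 = 1) :
    (semidirectToPGL ξ hξ).range =
      Subgroup.closure {tau ξ, (monomial 1 perm2 : PGL8), (monomial 1 perm3 : PGL8)} := by
  have hgen := ZMod.zpowers_ofAdd_one 8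
  rw [Subgroup.zpowers_eq_closure] at hgen
  rw [MonoidHom.range_eq_map, ← closure_image_inl_union_image_inr hgen (closure_a_one_xa_zero 2),
    MonoidHom.map_closure]
  simp only [Set.image_singleton, Set.image_insert_eq, semidirectToPGL, lift_inl, lift_inr,
    tauHom_ofAdd_one, quatHom_a_one, quatHom_xa_zero, Set.singleton_union]

lemma map_range_inl_semidirectToPGL (hξ : ξ ^ 8 = 1) :
    inl.range.map (semidirectToPGL ξ hξ) = Subgroup.zpowers (tau ξ) := by
  rw [MonoidHom.map_range, semidirectToPGL, lift_comp_inl, range_tauHom]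

end Embedding

/-- Let `τ ∈ PGL(8, ℂ)` be induced by `diag(1, ξ, …, ξ⁷)` for a primitive 8-th root of
unity `ξ`, and let `σ₂, σ₃ ∈ PGL(8, ℂ)` be the coordinate permutations `(1357)(2468)` and
`(1256)(4387)`. Then `⟨σ₂, σ₃⟩` is isomorphic to the quaternion group `Q₈`, and
`⟨τ, σ₂, σ₃⟩` is a nonabelian group of order 64, isomorphic to a semidirect product of the
normal subgroup `ℤ/8` generated by `τ` with the quaternion group `Q₈`. -/
theorem subgroup_generated_by_tau_sigma2_sigma3
    (ξ : ℂˣ) (hξ : IsPrimitiveRoot (ξ : ℂ) 8) :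
    let τ : PGL8 := QuotientGroup.mk (monomial (fun i => ξ ^ (i : ℕ)) 1)
    let σ₂ : PGL8 := QuotientGroup.mk (monomial 1 perm2)
    let σ₃ : PGL8 := QuotientGroup.mk (monomial 1 perm3)
    let H := Subgroup.closure {τ, σ₂, σ₃}
    Nonempty (Subgroup.closure {σ₂, σ₃} ≃* QuaternionGroup 2) ∧
    Nat.card H = 64 ∧
    (¬ ∀ a b : H, a * b = b * a) ∧
    ∃ (φ : QuaternionGroup 2 →* MulAut (Multiplicative (ZMod 8)))
      (e : H ≃* Multiplicative (ZMod 8) ⋊[φ] QuaternionGroup 2),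
      Subgroup.map e.toMonoidHom ((Subgroup.closure {τ}).subgroupOf H) =
        SemidirectProduct.inl.range := by
  intro τ σ₂ σ₃ H
  replace hξ := IsPrimitiveRoot.coe_units_iff.mp hξ
  have hΦ := semidirectToPGL_injective ξ hξ
  let E : Multiplicative (ZMod 8) ⋊[quatAction] QuaternionGroup 2 ≃* H :=
    (MonoidHom.ofInjective hΦ).trans
      (MulEquiv.subgroupCongr (range_semidirectToPGL ξ hξ.pow_eq_one))
  refine ⟨⟨((MonoidHom.ofInjective quatHom_injective).trans
    (MulEquiv.subgroupCongr range_quatHom)).symm⟩, ?_, fun hcomm => ?_, quatAction, E.symm, ?_⟩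
  · rw [← Nat.card_congr E.toEquiv, SemidirectProduct.card]
    simp [QuaternionGroup.card]
  · have : (inr (a 1) * inr (xa 0) : Multiplicative (ZMod 8) ⋊[quatAction] QuaternionGroup 2) =
        inr (xa 0) * inr (a 1) :=
      E.injective (by rw [map_mul, map_mul]; exact hcomm _ _)
    exact absurd (congrArg right this) (by decide)
  · rw [Subgroup.map_symm_subgroupOf_eq_comap (semidirectToPGL ξ hξ.pow_eq_one) E fun _ => rfl,
      ← Subgroup.zpowers_eq_closure]
    change (Subgroup.zpowers (tau ξ)).comap (semidirectToPGL ξ hξ.pow_eq_one) = _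
    rw [← map_range_inl_semidirectToPGL ξ hξ.pow_eq_one,
      Subgroup.comap_map_eq_self_of_injective hΦ]
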